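/- Uniform quadratic escape estimate for geodesics of 2-step nilpotent Lie groups: For every n ≥ 1 there exists a constant c > 0, depending only on n, with the following property. Let H be an n-dimensional real inner product space, Z a finite-dimensional real inner product space, and j : Z → End(H) linear with j(z) skew-adjoint for every z ∈ Z; define the bracket and the curves h(t), z(t) as in the 2-step nilpotent setup. Then for all z₀ ∈ Z and h₀ ∈ H with ‖z₀‖² + ‖h₀‖² = 1 and all t ≥ 0, one has ‖z(t)‖² + ‖h(t)‖² ≥ c·t². -/

import Mathlib

open MeasureTheory intervalIntegral
open scoped RealInnerProductSpace

/-!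
Write `A = j z₀` and `e(s) = exp(sA) h₀`, so that `h' = e` and `e' = A e`. Since `A` is
skew-adjoint, `exp(sA)` is orthogonal and `‖e(s)‖ = ‖h₀‖`. Pairing the central component
with `z₀` and using `⟪[h, e], z₀⟫ = ⟪A h, e⟫ = ‖h₀‖² - (d/ds)⟪h, e⟫` gives
`⟪z(t), z₀⟫ = t ‖z₀‖² + (t ‖h₀‖² - ⟪h(t), e(t)⟫) / 2 ≥ t / 2 - ‖h(t)‖ / 2`,
hence `t ≤ 2 ‖z(t)‖ + ‖h(t)‖` and, by Cauchy–Schwarz, `t² ≤ 5 (‖z(t)‖² + ‖h(t)‖²)`.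
-/

open NormedSpace

theorem intervalIntegral.inner_integral_left {E : Type*} [NormedAddCommGroup E]
    [InnerProductSpace ℝ E] [CompleteSpace E] {f : ℝ → E} {a b : ℝ}
    (hf : IntervalIntegrable f volume a b) (c : E) :
    ⟪∫ s in a..b, f s, c⟫ = ∫ s in a..b, ⟪f s, c⟫ := by
  simpa [real_inner_comm c] using ((innerSL ℝ c).intervalIntegral_comp_comm hf).symm

section ExpFlow

variable {E : Type*} [NormedAddCommGroup E] [NormedSpace ℝ E]

noncomputable def geodesicHorizontal (A : E →L[ℝ] E) (x : E) (t : ℝ) : E :=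
  ∫ s in (0 : ℝ)..t, exp (s • A) x

variable [CompleteSpace E]

theorem hasDerivAt_exp_smul_apply (A : E →L[ℝ] E) (x : E) (s : ℝ) :
    HasDerivAt (fun u : ℝ => exp (u • A) x) (A (exp (s • A) x)) s := by
  simpa using (hasDerivAt_exp_smul_const' A s).clm_apply (hasDerivAt_const s x)

theorem continuous_exp_smul_apply (A : E →L[ℝ] E) (x : E) :
    Continuous fun s : ℝ => exp (s • A) x :=
  continuous_iff_continuousAt.2 fun s => (hasDerivAt_exp_smul_apply A x s).continuousAt

theorem hasDerivAt_geodesicHorizontal (A : E →L[ℝ] E) (x : E) (t : ℝ) :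
    HasDerivAt (geodesicHorizontal A x) (exp (t • A) x) t :=
  ((continuous_exp_smul_apply A x).integral_hasStrictDerivAt 0 t).hasDerivAt

theorem continuous_geodesicHorizontal (A : E →L[ℝ] E) (x : E) :
    Continuous (geodesicHorizontal A x) :=
  continuous_iff_continuousAt.2 fun t => (hasDerivAt_geodesicHorizontal A x t).continuousAt

end ExpFlow

section SkewFlow

variable {H : Type*} [NormedAddCommGroup H] [InnerProductSpace ℝ H] [CompleteSpace H]

theorem ContinuousLinearMap.mem_skewAdjoint_iff_inner {A : H →L[ℝ] H} :
    A ∈ skewAdjoint (H →L[ℝ] H) ↔ ∀ x y, ⟪A x, y⟫ = -⟪x, A y⟫ := by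
  rw [skewAdjoint.mem_iff, ContinuousLinearMap.star_eq_adjoint, eq_comm,
    ContinuousLinearMap.eq_adjoint_iff]
  simp only [neg_apply, inner_neg_left, neg_eq_iff_eq_neg]

theorem norm_exp_smul_apply {A : H →L[ℝ] H} (hA : A ∈ skewAdjoint (H →L[ℝ] H)) (s : ℝ) (x : H) :
    ‖exp (s • A) x‖ = ‖x‖ := by
  let +nondep : NormedAlgebra ℚ (H →L[ℝ] H) := .restrictScalars ℚ ℝ _
  have hsA : s • A ∈ skewAdjoint (H →L[ℝ] H) := skewAdjoint.smul_mem s hA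
  have hu : exp (s • A) ∈ unitary (H →L[ℝ] H) := exp_mem_unitary_of_mem_skewAdjoint hsA
  exact ContinuousLinearMap.norm_map_of_mem_unitary hu x

theorem integral_inner_apply_geodesicHorizontal {A : H →L[ℝ] H}
    (hA : A ∈ skewAdjoint (H →L[ℝ] H)) (x : H) (t : ℝ) :
    ∫ s in (0 : ℝ)..t, ⟪A (geodesicHorizontal A x s), exp (s • A) x⟫ =
      t * ‖x‖ ^ 2 - ⟪geodesicHorizontal A x t, exp (t • A) x⟫ := by
  have hderiv : ∀ s, HasDerivAt (fun u => u * ‖x‖ ^ 2 - ⟪geodesicHorizontal A x u, exp (u • A) x⟫)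
      ⟪A (geodesicHorizontal A x s), exp (s • A) x⟫ s := by
    intro s
    refine ((hasDerivAt_mul_const (‖x‖ ^ 2)).sub ((hasDerivAt_geodesicHorizontal A x s).inner ℝ
      (hasDerivAt_exp_smul_apply A x s))).congr_deriv ?_
    rw [real_inner_self_eq_norm_sq, norm_exp_smul_apply hA,
      ContinuousLinearMap.mem_skewAdjoint_iff_inner.1 hA]
    ring
  have hcont : Continuous fun s => ⟪A (geodesicHorizontal A x s), exp (s • A) x⟫ :=
    (A.continuous.comp (continuous_geodesicHorizontal A x)).inner (continuous_exp_smul_apply A x)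
  rw [integral_eq_sub_of_hasDerivAt (fun s _ => hderiv s) (hcont.intervalIntegrable 0 t)]
  simp [geodesicHorizontal]

end SkewFlow

section Central

variable {H Z : Type*} [NormedAddCommGroup H] [InnerProductSpace ℝ H]
  [NormedAddCommGroup Z] [InnerProductSpace ℝ Z]

noncomputable def geodesicCentral (j : Z → H →L[ℝ] H) (bracket : H →ₗ[ℝ] H →ₗ[ℝ] Z)
    (z₀ : Z) (x : H) (t : ℝ) : Z :=
  t • z₀ + (1 / 2 : ℝ) •
    ∫ s in (0 : ℝ)..t, bracket (geodesicHorizontal (j z₀) x s) (exp (s • j z₀) x)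

variable [FiniteDimensional ℝ H] [CompleteSpace Z] {j : Z → H →L[ℝ] H}
  {bracket : H →ₗ[ℝ] H →ₗ[ℝ] Z} {z₀ : Z}

theorem inner_geodesicCentral_self (hA : j z₀ ∈ skewAdjoint (H →L[ℝ] H))
    (hbr : ∀ h k, ⟪bracket h k, z₀⟫ = ⟪j z₀ h, k⟫) (x : H) (t : ℝ) :
    ⟪geodesicCentral j bracket z₀ x t, z₀⟫ =
      t * ‖z₀‖ ^ 2 + (t * ‖x‖ ^ 2 - ⟪geodesicHorizontal (j z₀) x t, exp (t • j z₀) x⟫) / 2 := by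
  have hcont : Continuous fun s => bracket (geodesicHorizontal (j z₀) x s) (exp (s • j z₀) x) :=
    (bracket.toContinuousBilinearMap.continuous.comp
      (continuous_geodesicHorizontal (j z₀) x)).clm_apply (continuous_exp_smul_apply (j z₀) x)
  rw [geodesicCentral, inner_add_left, real_inner_smul_left, real_inner_smul_left,
    real_inner_self_eq_norm_sq, inner_integral_left (hcont.intervalIntegrable 0 t)]
  simp only [hbr, integral_inner_apply_geodesicHorizontal hA]
  ring

theorem le_two_mul_norm_geodesicCentral_add_norm_geodesicHorizontal
    (hA : j z₀ ∈ skewAdjoint (H →L[ℝ] H)) (hbr : ∀ h k, ⟪bracket h k, z₀⟫ = ⟪j z₀ h, k⟫)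
    {x : H} (hunit : ‖z₀‖ ^ 2 + ‖x‖ ^ 2 = 1) {t : ℝ} (ht : 0 ≤ t) :
    t ≤ 2 * ‖geodesicCentral j bracket z₀ x t‖ + ‖geodesicHorizontal (j z₀) x t‖ := by
  have hz₀ : ‖z₀‖ ≤ 1 := by nlinarith [norm_nonneg z₀, sq_nonneg ‖x‖]
  have hx : ‖x‖ ≤ 1 := by nlinarith [norm_nonneg x, sq_nonneg ‖z₀‖]
  have hcentral : ⟪geodesicCentral j bracket z₀ x t, z₀⟫ ≤ ‖geodesicCentral j bracket z₀ x t‖ :=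
    (real_inner_le_norm _ _).trans (mul_le_of_le_one_right (norm_nonneg _) hz₀)
  have hhorizontal : ⟪geodesicHorizontal (j z₀) x t, exp (t • j z₀) x⟫ ≤
      ‖geodesicHorizontal (j z₀) x t‖ := by
    refine (real_inner_le_norm _ _).trans ?_
    rw [norm_exp_smul_apply hA]
    exact mul_le_of_le_one_right (norm_nonneg _) hx
  nlinarith [inner_geodesicCentral_self hA hbr x t, mul_nonneg ht (sq_nonneg ‖z₀‖)]

end Central

theorem nilpotent_uniform_quadratic_escape_general (n : ℕ) :
    ∃ c : ℝ, 0 < c ∧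
      ∀ (H Z : Type)
        [NormedAddCommGroup H] [InnerProductSpace ℝ H] [FiniteDimensional ℝ H]
        [NormedAddCommGroup Z] [InnerProductSpace ℝ Z] [FiniteDimensional ℝ Z],
        Module.finrank ℝ H = n →
        ∀ (j : Z →ₗ[ℝ] H →L[ℝ] H),
          (∀ (z : Z) (x y : H), ⟪j z x, y⟫ = -⟪x, j z y⟫) →
        ∀ (bracket : H →ₗ[ℝ] H →ₗ[ℝ] Z),
          (∀ (h k : H) (z : Z), ⟪bracket h k, z⟫ = ⟪j z h, k⟫) →
        ∀ (z₀ : Z) (h₀ : H), ‖z₀‖ ^ 2 + ‖h₀‖ ^ 2 = 1 →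
        ∀ t : ℝ, 0 ≤ t →
          c * t ^ 2 ≤
            ‖t • z₀ + (1 / 2 : ℝ) •
                ∫ s in (0:ℝ)..t,
                  bracket (∫ u in (0:ℝ)..s, NormedSpace.exp (u • j z₀) h₀)
                    (NormedSpace.exp (s • j z₀) h₀)‖ ^ 2 +
              ‖∫ s in (0:ℝ)..t, NormedSpace.exp (s • j z₀) h₀‖ ^ 2 := by
  refine ⟨1 / 5, by norm_num, ?_⟩
  intro H Z _ _ _ _ _ _ _ j hj bracket hbr z₀ h₀ hunit t ht
  have hA : j z₀ ∈ skewAdjoint (H →L[ℝ] H) :=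
    ContinuousLinearMap.mem_skewAdjoint_iff_inner.2 (hj z₀)
  have hescape := le_two_mul_norm_geodesicCentral_add_norm_geodesicHorizontal (j := j) hA
    (fun h k => hbr h k z₀) hunit ht
  change 1 / 5 * t ^ 2 ≤ ‖geodesicCentral j bracket z₀ h₀ t‖ ^ 2 +
    ‖geodesicHorizontal (j z₀) h₀ t‖ ^ 2
  -- `(2a + b)² + (a - 2b)² = 5 (a² + b²)`
  nlinarith [mul_self_le_mul_self ht hescape,
    sq_nonneg (‖geodesicCentral j bracket z₀ h₀ t‖ - 2 * ‖geodesicHorizontal (j z₀) h₀ t‖)]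

/-- **Uniform quadratic escape estimate for geodesics of 2-step nilpotent Lie groups.**
For every `n ≥ 1` there is `c > 0`, depending only on `n`, such that for every 2-step
nilpotent setup `j : Z → End(H)` with `H` of dimension `n`, every unit initial velocity
`z₀ + h₀` and every `t ≥ 0`, the exponential coordinates
`h(t) = ∫₀^t e^{s j(z₀)} h₀ ds` and `z(t) = t z₀ + ½ ∫₀^t [h(s), h'(s)] ds` of the geodesic
satisfy `‖z(t)‖² + ‖h(t)‖² ≥ c t²`. -/
theorem nilpotent_uniform_quadratic_escape (n : ℕ) (hn : 1 ≤ n) :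
    ∃ c : ℝ, 0 < c ∧
      ∀ (H Z : Type)
        [NormedAddCommGroup H] [InnerProductSpace ℝ H] [FiniteDimensional ℝ H]
        [NormedAddCommGroup Z] [InnerProductSpace ℝ Z] [FiniteDimensional ℝ Z],
        Module.finrank ℝ H = n →
        ∀ (j : Z →ₗ[ℝ] H →L[ℝ] H),
          (∀ (z : Z) (x y : H), ⟪j z x, y⟫ = -⟪x, j z y⟫) →
        ∀ (bracket : H →ₗ[ℝ] H →ₗ[ℝ] Z),
          (∀ (h k : H) (z : Z), ⟪bracket h k, z⟫ = ⟪j z h, k⟫) →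
        ∀ (z₀ : Z) (h₀ : H), ‖z₀‖ ^ 2 + ‖h₀‖ ^ 2 = 1 →
        ∀ t : ℝ, 0 ≤ t →
          c * t ^ 2 ≤
            ‖t • z₀ + (1 / 2 : ℝ) •
                ∫ s in (0:ℝ)..t,
                  bracket (∫ u in (0:ℝ)..s, NormedSpace.exp (u • j z₀) h₀)
                    (NormedSpace.exp (s • j z₀) h₀)‖ ^ 2 +
              ‖∫ s in (0:ℝ)..t, NormedSpace.exp (s • j z₀) h₀‖ ^ 2 :=
  nilpotent_uniform_quadratic_escape_general n
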